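/- Every agent-alternating formula satisfiable in some Kripke model is satisfiable in a Kripke model all of whose accessibility relations are symmetric; in particular, one can take the agent-alternating unraveling in which R_a(s) = {s with last element removed} whenever the sequence s ends with a pair for agent a. Consequently, K and KB (resp. KD and KDB) prove the same agent-alternating formulas. -/

import Mathlib

/-- Formulas of the multi-agent modal language: p | ¬φ | (φ ∧ φ) | □_a φ. -/
inductive Fm (A : Type) : Type
  | atom : ℕ → Fm A
  | neg : Fm A → Fm A
  | and : Fm A → Fm A → Fm A
  | box : A → Fm A → Fm A

namespace Fm
def imp {A : Type} (φ ψ : Fm A) : Fm A := .neg (.and φ (.neg ψ))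
def or {A : Type} (φ ψ : Fm A) : Fm A := .neg (.and (.neg φ) (.neg ψ))
def dia {A : Type} (a : A) (φ : Fm A) : Fm A := .neg (.box a (.neg φ))
end Fm

/-- Kripke models with agent set `A` and world type `W`. -/
structure Kripke (A W : Type) where
  R : A → W → W → Prop
  V : ℕ → W → Prop

/-- Satisfaction. -/
def Sat {A W : Type} (M : Kripke A W) : W → Fm A → Prop
  | w, .atom n => M.V n w
  | w, .neg φ => ¬ Sat M w φ
  | w, .and φ ψ => Sat M w φ ∧ Sat M w ψ
  | w, .box a φ => ∀ v, M.R a w v → Sat M v φ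

/-- The fragments L_{-a}: φ ::= p | □_x ψ (x ≠ a, ψ ∈ L_{-x}) | ¬φ | (φ ∧ φ). -/
inductive LMinus {A : Type} : A → Fm A → Prop
  | atom (a : A) (n : ℕ) : LMinus a (.atom n)
  | box {a x : A} {ψ : Fm A} : x ≠ a → LMinus x ψ → LMinus a (.box x ψ)
  | neg {a : A} {φ : Fm A} : LMinus a φ → LMinus a (.neg φ)
  | and {a : A} {φ ψ : Fm A} : LMinus a φ → LMinus a ψ → LMinus a (.and φ ψ)

/-- The agent-alternating fragment L_alt. -/
inductive LAlt {A : Type} : Fm A → Prop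
  | atom (n : ℕ) : LAlt (.atom n)
  | chi {φ : Fm A} (a : A) : LMinus a φ → LAlt φ
  | neg {φ : Fm A} : LAlt φ → LAlt (.neg φ)
  | and {φ ψ : Fm A} : LAlt φ → LAlt ψ → LAlt (.and φ ψ)

/-- The fragments L_X for X ⊆ A: φ ::= p | □_x ψ (x ∈ X, ψ ∈ L_{X\{x}}) | ¬φ | (φ ∧ φ). -/
inductive LX {A : Type} : Set A → Fm A → Prop
  | atom (X : Set A) (n : ℕ) : LX X (.atom n)
  | box {X : Set A} {x : A} {ψ : Fm A} : x ∈ X → LX (X \ {x}) ψ → LX X (.box x ψ)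
  | neg {X : Set A} {φ : Fm A} : LX X φ → LX X (.neg φ)
  | and {X : Set A} {φ ψ : Fm A} : LX X φ → LX X ψ → LX X (.and φ ψ)

/-- Immediate subformula relation. -/
inductive ISub {A : Type} : Fm A → Fm A → Prop
  | neg (φ : Fm A) : ISub φ (.neg φ)
  | andL (φ ψ : Fm A) : ISub φ (.and φ ψ)
  | andR (φ ψ : Fm A) : ISub ψ (.and φ ψ)
  | box (a : A) (φ : Fm A) : ISub φ (.box a φ)

/-- An occurrence type of φ: a nonempty sequence of formulas, each an immediate
subformula of the next, ending in φ. -/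
def IsOcc {A : Type} (l : List (Fm A)) (φ : Fm A) : Prop :=
  l ≠ [] ∧ l.getLast? = some φ ∧ List.Chain' ISub l

/-- A □_a-occurrence of φ. -/
def IsBoxOcc {A : Type} (a : A) (l : List (Fm A)) (φ : Fm A) : Prop :=
  IsOcc l φ ∧ ∃ β, l.head? = some (Fm.box a β)

/-- O ≤ O' iff O' is a suffix of O (prefix-extension order on occurrences). -/
def OccLe {A : Type} (O O' : List (Fm A)) : Prop := O' <:+ O

/-- φ is agent-alternating: between any two nested □_a-occurrences there is a
□_b-occurrence for some b ≠ a. -/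
def AgentAlternating {A : Type} (φ : Fm A) : Prop :=
  ∀ (a : A) (O O' : List (Fm A)), IsBoxOcc a O φ → IsBoxOcc a O' φ → O ≠ O' → OccLe O O' →
    ∃ b : A, b ≠ a ∧ ∃ O'' : List (Fm A), IsBoxOcc b O'' φ ∧ OccLe O O'' ∧ OccLe O'' O'

/-- φ is agent-nonrepeating: no □_a-occurrence lies below another □_a-occurrence. -/
def AgentNonrepeating {A : Type} (φ : Fm A) : Prop :=
  ∀ (a : A) (O O' : List (Fm A)), IsBoxOcc a O φ → IsBoxOcc a O' φ → O ≠ O' → ¬ OccLe O O'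

/-- Boolean evaluation treating atoms and boxed formulas as atomic. -/
def evalP {A : Type} (v : Fm A → Bool) : Fm A → Bool
  | .neg φ => ! evalP v φ
  | .and φ ψ => evalP v φ && evalP v ψ
  | φ => v φ

/-- Propositional tautologies (in the signature ¬, ∧, with boxed formulas atomic). -/
def Taut {A : Type} (φ : Fm A) : Prop := ∀ v : Fm A → Bool, evalP v φ = true

/-- Provability in the smallest normal modal logic containing the axioms `Ax`. -/
inductive Prv {A : Type} (Ax : Fm A → Prop) : Fm A → Prop
  | taut {φ : Fm A} : Taut φ → Prv Ax φ
  | ax {φ : Fm A} : Ax φ → Prv Ax φ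
  | k (a : A) (φ ψ : Fm A) :
      Prv Ax (Fm.imp (.box a (Fm.imp φ ψ)) (Fm.imp (.box a φ) (.box a ψ)))
  | mp {φ ψ : Fm A} : Prv Ax (Fm.imp φ ψ) → Prv Ax φ → Prv Ax ψ
  | nec {φ : Fm A} (a : A) : Prv Ax φ → Prv Ax (.box a φ)

def AxNone {A : Type} : Fm A → Prop := fun _ => False
def AxT {A : Type} : Fm A → Prop := fun χ => ∃ (a : A) (φ : Fm A), χ = Fm.imp (.box a φ) φ
def Ax4 {A : Type} : Fm A → Prop := fun χ => ∃ (a : A) (φ : Fm A), χ = Fm.imp (.box a φ) (.box a (.box a φ))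
def Ax5 {A : Type} : Fm A → Prop := fun χ => ∃ (a : A) (φ : Fm A), χ = Fm.imp (.neg (.box a φ)) (.box a (.neg (.box a φ)))
def AxB {A : Type} : Fm A → Prop := fun χ => ∃ (a : A) (φ : Fm A), χ = Fm.imp φ (.box a (Fm.dia a φ))
def AxD {A : Type} : Fm A → Prop := fun χ => ∃ (a : A) (φ : Fm A), χ = Fm.imp (.box a φ) (Fm.dia a φ)

def Ser {W : Type} (R : W → W → Prop) : Prop := ∀ u, ∃ v, R u v
def Eucl {W : Type} (R : W → W → Prop) : Prop := ∀ u v w, R u v → R u w → R v w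

/-- Agent-alternating bisimulation family (`none` plays the role of `alt`). -/
def IsAAFamily {A W1 W2 : Type} (M : Kripke A W1) (N : Kripke A W2)
    (f : Option A → W1 → W2 → Prop) : Prop :=
  ∀ (o : Option A) (u : W1) (v : W2), f o u v →
    (∀ n, M.V n u ↔ N.V n v) ∧
    (∀ b : A, o ≠ some b →
      (∀ u', M.R b u u' → ∃ v', N.R b v v' ∧ f (some b) u' v') ∧
      (∀ v', N.R b v v' → ∃ u', M.R b u u' ∧ f (some b) u' v'))

/-- Agent-nonrepeating bisimulation family. -/
def IsNRFamily {A W1 W2 : Type} (M : Kripke A W1) (N : Kripke A W2)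
    (f : Set A → W1 → W2 → Prop) : Prop :=
  ∀ (X : Set A) (u : W1) (v : W2), f X u v →
    (∀ n, M.V n u ↔ N.V n v) ∧
    (∀ x ∈ X,
      (∀ u', M.R x u u' → ∃ v', N.R x v v' ∧ f (X \ {x}) u' v') ∧
      (∀ v', N.R x v v' → ∃ u', M.R x u u' ∧ f (X \ {x}) u' v'))

/-- One step in an agent-alternating sequence. -/
def Step {A W : Type} (M : Kripke A W) : (Option A × W) → (Option A × W) → Prop :=
  fun x y => x.1 ≠ y.1 ∧ ∃ b : A, y.1 = some b ∧ M.R b x.2 y.2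

/-- Valid worlds of an agent-alternating unraveling. -/
def ValidSeq {A W : Type} (M : Kripke A W) (s : List (Option A × W)) : Prop :=
  s ≠ [] ∧ (∃ w, s.head? = some (none, w)) ∧ (∀ x ∈ s.tail, x.1 ≠ none) ∧
    List.Chain' (Step M) s

def UWorld {A W : Type} (M : Kripke A W) : Type := {s : List (Option A × W) // ValidSeq M s}

def lastEntry {A W : Type} {M : Kripke A W} (s : UWorld M) : Option A × W :=
  s.val.getLast s.prop.1

/-- N is an agent-alternating unraveling of M. -/
def IsAAUnraveling {A W : Type} (M : Kripke A W) (N : Kripke A (UWorld M)) : Prop :=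
  (∀ (b : A) (s : UWorld M), (lastEntry s).1 ≠ some b →
    ∀ t : UWorld M, N.R b s t ↔ ∃ w', M.R b (lastEntry s).2 w' ∧ t.val = s.val ++ [(some b, w')])
  ∧ (∀ n (s : UWorld M), N.V n s ↔ M.V n (lastEntry s).2)

/-- The canonical relation family between M and any of its agent-alternating unravelings. -/
def PFam {A W : Type} (M : Kripke A W) : Option A → W → UWorld M → Prop :=
  fun o u s => lastEntry s = (o, u)

/-- Finite agent-alternating bisimulation relations: `BisimN M N n (some a)` is ⇆_{-a}^n,
`BisimN M N n none` is ⇆_alt^n. -/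
def BisimN {A W1 W2 : Type} (M : Kripke A W1) (N : Kripke A W2) :
    ℕ → Option A → W1 → W2 → Prop
  | 0, _, u, v => ∀ n, M.V n u ↔ N.V n v
  | (n+1), o, u, v => (∀ m, M.V m u ↔ N.V m v) ∧
      ∀ b : A, o ≠ some b →
        (∀ u', M.R b u u' → ∃ v', N.R b v v' ∧ BisimN M N n (some b) u' v') ∧
        (∀ v', N.R b v v' → ∃ u', M.R b u u' ∧ BisimN M N n (some b) u' v')

/-- Standard n-bisimilarity. -/
def StdBisimN {A W1 W2 : Type} (M : Kripke A W1) (N : Kripke A W2) :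
    ℕ → W1 → W2 → Prop
  | 0, u, v => ∀ n, M.V n u ↔ N.V n v
  | (n+1), u, v => (∀ m, M.V m u ↔ N.V m v) ∧
      ∀ b : A,
        (∀ u', M.R b u u' → ∃ v', N.R b v v' ∧ StdBisimN M N n u' v') ∧
        (∀ v', N.R b v v' → ∃ u', M.R b u u' ∧ StdBisimN M N n u' v')


/-!
An `L_alt` formula cannot tell a model apart from any of its agent-alternating unravelings: the
bisimulation between them only has to match `b`-steps out of a world not entered by a `b`-step,
and those are exactly the steps the unraveling fixes. At a world entered by an `a`-step the
relation `R a` is free, so we let it lead back to the predecessor; then every `R a` is symmetric,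
and seriality of the original model is kept. Applied to the canonical model of K (of KD), an
`L_alt` formula unprovable in K (in KD) thus fails in a model validating B (and D).
-/

namespace Fm
variable {A : Type}

def top : Fm A := imp (atom 0) (atom 0)

def conj : List (Fm A) → Fm A
  | [] => top
  | φ :: l => and φ (conj l)

end Fm

open Fm

section Propositional
variable {A : Type} (v : Fm A → Bool) (φ ψ : Fm A) (l : List (Fm A))

@[simp] theorem evalP_neg : evalP v (.neg φ) = !evalP v φ := rfl
@[simp] theorem evalP_and : evalP v (.and φ ψ) = (evalP v φ && evalP v ψ) := rfl
@[simp] theorem evalP_imp : evalP v (φ.imp ψ) = !(evalP v φ && !evalP v ψ) := rfl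
@[simp] theorem evalP_top : evalP v (top : Fm A) = true := by simp [top]
@[simp] theorem evalP_conj_nil : evalP v (conj ([] : List (Fm A))) = true := evalP_top v
@[simp] theorem evalP_conj_cons : evalP v (conj (φ :: l)) = (evalP v φ && evalP v (conj l)) := rfl

end Propositional

namespace Prv
variable {A : Type} {Ax : Fm A → Prop} {φ ψ χ : Fm A} {l l' : List (Fm A)}

theorem mono {Ax' : Fm A → Prop} (h : ∀ χ, Ax χ → Ax' χ) (hp : Prv Ax φ) : Prv Ax' φ := by
  induction hp with
  | taut ht => exact taut ht
  | ax ha => exact ax (h _ ha)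
  | k a φ ψ => exact k a φ ψ
  | mp _ _ ih₁ ih₂ => exact ih₁.mp ih₂
  | nec a _ ih => exact ih.nec a

theorem of_taut_imp (t : Taut (φ.imp ψ)) (h : Prv Ax φ) : Prv Ax ψ := (taut t).mp h

theorem of_taut_imp₂ (t : Taut (φ.imp (ψ.imp χ))) (h₁ : Prv Ax φ) (h₂ : Prv Ax ψ) :
    Prv Ax χ :=
  ((taut t).mp h₁).mp h₂

theorem imp_trans (h₁ : Prv Ax (φ.imp ψ)) (h₂ : Prv Ax (ψ.imp χ)) : Prv Ax (φ.imp χ) :=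
  of_taut_imp₂ (fun v => by simp; grind) h₁ h₂

theorem imp_and (h₁ : Prv Ax (φ.imp ψ)) (h₂ : Prv Ax (φ.imp χ)) : Prv Ax (φ.imp (ψ.and χ)) :=
  of_taut_imp₂ (fun v => by simp; grind) h₁ h₂

theorem box_imp_box (a : A) (h : Prv Ax (φ.imp ψ)) : Prv Ax ((box a φ).imp (box a ψ)) :=
  (k a φ ψ).mp (h.nec a)

theorem conj_imp_of_mem (h : ψ ∈ l) : Prv Ax ((conj l).imp ψ) := by
  induction l with
  | nil => cases h
  | cons φ l ih =>
    rcases List.mem_cons.1 h with rfl | h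
    · exact taut fun v => by simp; grind
    · exact imp_trans (taut fun v => by simp; grind) (ih h)

theorem conj_imp_conj (h : l ⊆ l') : Prv Ax ((conj l').imp (conj l)) := by
  induction l with
  | nil => exact taut fun v => by simp
  | cons φ l ih =>
    exact imp_and (conj_imp_of_mem (h List.mem_cons_self))
      (ih fun ψ hψ => h (List.mem_cons_of_mem _ hψ))

theorem conj_map_box_imp_box_conj (a : A) (l : List (Fm A)) :
    Prv Ax ((conj (l.map (box a))).imp (box a (conj l))) := by
  induction l with
  | nil =>
    exact of_taut_imp (φ := box a (conj [])) (fun v => by simp) ((taut fun v => evalP_top v).nec a)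
  | cons φ l ih =>
    have hpair : Prv Ax ((box a φ).imp ((box a (conj l)).imp (box a (conj (φ :: l))))) :=
      imp_trans (box_imp_box a (taut fun v => by simp; grind)) (k a _ _)
    exact of_taut_imp₂ (fun v => by simp; grind) hpair ih

theorem conj_map_box_imp_box (a : A) (h : Prv Ax ((conj l).imp φ)) :
    Prv Ax ((conj (l.map (box a))).imp (box a φ)) :=
  imp_trans (conj_map_box_imp_box_conj a l) (box_imp_box a h)

end Prv

section Consistency
variable {A : Type} {Ax : Fm A → Prop} {Γ : Set (Fm A)} {φ ψ : Fm A}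

def Consistent (Ax : Fm A → Prop) (Γ : Set (Fm A)) : Prop :=
  ∀ l : List (Fm A), (∀ ψ ∈ l, ψ ∈ Γ) → ¬ Prv Ax (.neg (conj l))

def MaximalConsistent (Ax : Fm A → Prop) (Γ : Set (Fm A)) : Prop :=
  Consistent Ax Γ ∧ ∀ φ, φ ∈ Γ ∨ .neg φ ∈ Γ

theorem isOfFiniteCharacter_consistent : Order.IsOfFiniteCharacter {Γ | Consistent Ax Γ} :=
  fun _ => ⟨fun h _ hy _ l hl => h l fun _ hψ => hy (hl _ hψ),
    fun h l hl => h {ψ | ψ ∈ l} (fun _ => hl _) l.finite_toSet l fun _ => id⟩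

theorem exists_prv_imp_neg_of_not_consistent_insert (h : ¬ Consistent Ax (insert φ Γ)) :
    ∃ l : List (Fm A), (∀ ψ ∈ l, ψ ∈ Γ) ∧ Prv Ax ((conj l).imp (.neg φ)) := by
  classical
  simp only [Consistent, not_forall, not_not] at h
  obtain ⟨l', hl', hprv⟩ := h
  refine ⟨l'.filter (· ∈ Γ), fun ψ hψ => by simpa using (List.mem_filter.1 hψ).2, ?_⟩
  have hsub : l' ⊆ φ :: l'.filter (· ∈ Γ) := fun ψ hψ => by
    rcases hl' ψ hψ with rfl | hΓ
    · exact List.mem_cons_self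
    · exact List.mem_cons_of_mem _ (List.mem_filter.2 ⟨hψ, by simpa using hΓ⟩)
  exact Prv.of_taut_imp₂ (fun v => by simp; grind) (Prv.conj_imp_conj hsub) hprv

theorem consistent_singleton_neg (h : ¬ Prv Ax φ) : Consistent Ax {.neg φ} := by
  intro l hl hprv
  have hsub : l ⊆ [.neg φ] := fun ψ hψ => by simpa using hl ψ hψ
  exact h (Prv.of_taut_imp₂ (fun v => by simp; grind) (Prv.conj_imp_conj hsub) hprv)

theorem exists_maximalConsistent_superset (hΓ : Consistent Ax Γ) :
    ∃ Δ, Γ ⊆ Δ ∧ MaximalConsistent Ax Δ := by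
  obtain ⟨Δ, hΓΔ, hΔ, hmax⟩ := isOfFiniteCharacter_consistent.exists_maximal hΓ
  refine ⟨Δ, hΓΔ, hΔ, fun φ => ?_⟩
  by_contra! hφ
  have hcons : ∀ ψ ∉ Δ, ¬ Consistent Ax (insert ψ Δ) := fun ψ hψ hc =>
    hψ (hmax hc (Set.subset_insert ψ Δ) (Set.mem_insert ψ Δ))
  obtain ⟨l₁, hl₁, hp₁⟩ := exists_prv_imp_neg_of_not_consistent_insert (hcons _ hφ.1)
  obtain ⟨l₂, hl₂, hp₂⟩ := exists_prv_imp_neg_of_not_consistent_insert (hcons _ hφ.2)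
  refine hΔ (l₁ ++ l₂) (fun ψ hψ => (List.mem_append.1 hψ).elim (hl₁ ψ) (hl₂ ψ)) ?_
  have e₁ := Prv.imp_trans (Prv.conj_imp_conj (List.subset_append_left l₁ l₂)) hp₁
  have e₂ := Prv.imp_trans (Prv.conj_imp_conj (List.subset_append_right l₁ l₂)) hp₂
  exact Prv.of_taut_imp₂ (fun v => by simp; grind) e₁ e₂

namespace MaximalConsistent
variable (hΓ : MaximalConsistent Ax Γ)
include hΓ

theorem mem_of_prv_imp {l : List (Fm A)} (hl : ∀ ψ ∈ l, ψ ∈ Γ) (h : Prv Ax ((conj l).imp φ)) :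
    φ ∈ Γ := by
  refine (hΓ.2 φ).resolve_right fun hneg => hΓ.1 (.neg φ :: l) ?_ ?_
  · exact fun ψ hψ => (List.mem_cons.1 hψ).elim (· ▸ hneg) (hl ψ)
  · exact Prv.of_taut_imp (fun v => by simp; grind) h

theorem mem_of_prv (h : Prv Ax φ) : φ ∈ Γ :=
  hΓ.mem_of_prv_imp (l := []) (by simp) (Prv.of_taut_imp (fun v => by simp) h)

theorem neg_mem_iff : .neg φ ∈ Γ ↔ φ ∉ Γ := by
  refine ⟨fun hneg hφ => hΓ.1 [φ, .neg φ] ?_ (Prv.taut fun v => by simp), (hΓ.2 φ).resolve_left⟩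
  simp [hφ, hneg]

theorem and_mem_iff : .and φ ψ ∈ Γ ↔ φ ∈ Γ ∧ ψ ∈ Γ := by
  refine ⟨fun h => ⟨?_, ?_⟩, fun h => ?_⟩
  iterate 2
    exact hΓ.mem_of_prv_imp (l := [.and φ ψ]) (by simpa using h) (Prv.taut fun v => by simp; grind)
  · exact hΓ.mem_of_prv_imp (l := [φ, ψ]) (by simpa using h) (Prv.taut fun v => by simp; grind)

end MaximalConsistent
end Consistency

section Canonical
variable {A : Type} {Ax : Fm A → Prop}

def CanonicalWorld (Ax : Fm A → Prop) : Type := {Γ : Set (Fm A) // MaximalConsistent Ax Γ}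

def canonicalModel (Ax : Fm A → Prop) : Kripke A (CanonicalWorld Ax) where
  R a Γ Δ := ∀ φ, box a φ ∈ Γ.val → φ ∈ Δ.val
  V n Γ := atom n ∈ Γ.val

theorem box_neg_mem_of_not_consistent (Γ : CanonicalWorld Ax) (a : A) {φ : Fm A}
    (h : ¬ Consistent Ax (insert φ {ψ | box a ψ ∈ Γ.val})) : box a (.neg φ) ∈ Γ.val := by
  obtain ⟨l, hl, hprv⟩ := exists_prv_imp_neg_of_not_consistent_insert h
  refine Γ.prop.mem_of_prv_imp (l := l.map (box a)) ?_ (Prv.conj_map_box_imp_box a hprv)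
  simpa using hl

theorem exists_canonical_succ_of_consistent {Γ : CanonicalWorld Ax} {a : A} {φ : Fm A}
    (h : Consistent Ax (insert φ {ψ | box a ψ ∈ Γ.val})) :
    ∃ Δ : CanonicalWorld Ax, (canonicalModel Ax).R a Γ Δ ∧ φ ∈ Δ.val := by
  obtain ⟨Δ, hsub, hΔ⟩ := exists_maximalConsistent_superset h
  exact ⟨⟨Δ, hΔ⟩, fun _ hψ => hsub (Or.inr hψ), hsub (Or.inl rfl)⟩

theorem exists_canonical_succ_not_mem {Γ : CanonicalWorld Ax} {a : A} {φ : Fm A}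
    (h : box a φ ∉ Γ.val) : ∃ Δ : CanonicalWorld Ax, (canonicalModel Ax).R a Γ Δ ∧ φ ∉ Δ.val := by
  obtain ⟨Δ, hR, hΔ⟩ := exists_canonical_succ_of_consistent (φ := .neg φ) (a := a) (Γ := Γ) <| by
    by_contra hc
    refine h (Γ.prop.mem_of_prv_imp (l := [box a (.neg (.neg φ))]) ?_ ?_)
    · simpa using box_neg_mem_of_not_consistent Γ a hc
    · have hdne : Prv Ax ((box a (.neg (.neg φ))).imp (box a φ)) :=
        Prv.box_imp_box a (Prv.taut fun v => by simp)
      exact Prv.imp_trans (Prv.taut fun v => by simp) hdne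
  exact ⟨Δ, hR, Δ.prop.neg_mem_iff.1 hΔ⟩

theorem sat_canonicalModel_iff (Γ : CanonicalWorld Ax) (φ : Fm A) :
    Sat (canonicalModel Ax) Γ φ ↔ φ ∈ Γ.val := by
  induction φ generalizing Γ with
  | atom n => exact Iff.rfl
  | neg φ ih => exact (not_congr (ih Γ)).trans Γ.prop.neg_mem_iff.symm
  | and φ ψ ihφ ihψ => exact (and_congr (ihφ Γ) (ihψ Γ)).trans Γ.prop.and_mem_iff.symm
  | box a φ ih =>
    refine ⟨fun h => ?_, fun h Δ hR => (ih Δ).2 (hR φ h)⟩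
    by_contra hn
    obtain ⟨Δ, hR, hφ⟩ := exists_canonical_succ_not_mem hn
    exact hφ ((ih Δ).1 (h Δ hR))

theorem exists_not_sat_canonicalModel {φ : Fm A} (h : ¬ Prv Ax φ) :
    ∃ Γ : CanonicalWorld Ax, ¬ Sat (canonicalModel Ax) Γ φ := by
  obtain ⟨Δ, hφΔ, hΔ⟩ := exists_maximalConsistent_superset (consistent_singleton_neg h)
  exact ⟨⟨Δ, hΔ⟩, (sat_canonicalModel_iff ⟨Δ, hΔ⟩ (.neg φ)).2 (hφΔ rfl)⟩

theorem ser_canonicalModel (hD : ∀ χ, AxD χ → Ax χ) (a : A) : Ser ((canonicalModel Ax).R a) := by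
  intro Γ
  obtain ⟨Δ, hR, -⟩ := exists_canonical_succ_of_consistent (φ := top) (a := a) (Γ := Γ) <| by
    by_contra hc
    refine Γ.prop.neg_mem_iff.1 ?_ (box_neg_mem_of_not_consistent Γ a hc)
    have hbox : box a top ∈ Γ.val := Γ.prop.mem_of_prv ((Prv.taut fun v => evalP_top v).nec a)
    exact Γ.prop.mem_of_prv_imp (l := [box a top]) (by simpa using hbox)
      (Prv.imp_trans (Prv.taut fun v => by simp) (Prv.ax (hD _ ⟨a, top, rfl⟩)))
  exact ⟨Δ, hR⟩

end Canonical

section Soundness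
variable {A W : Type} (M : Kripke A W)

theorem sat_imp (w : W) (φ ψ : Fm A) : Sat M w (φ.imp ψ) ↔ (Sat M w φ → Sat M w ψ) := by
  simp [Fm.imp, Sat]

theorem sat_dia (w : W) (a : A) (φ : Fm A) : Sat M w (dia a φ) ↔ ∃ v, M.R a w v ∧ Sat M v φ := by
  simp [Fm.dia, Sat]

theorem sat_of_taut (w : W) {φ : Fm A} (h : Taut φ) : Sat M w φ := by
  classical
  have key : ∀ ψ : Fm A, evalP (fun χ => decide (Sat M w χ)) ψ = true ↔ Sat M w ψ := by
    intro ψ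
    induction ψ with
    | atom n => exact decide_eq_true_iff
    | neg ψ ih => simp [Sat, ← ih]
    | and ψ χ ih₁ ih₂ => simp [Sat, ih₁, ih₂]
    | box a ψ => exact decide_eq_true_iff
  exact (key φ).1 (h _)

theorem Prv.sound {Ax : Fm A → Prop} (hax : ∀ χ, Ax χ → ∀ w, Sat M w χ) {φ : Fm A}
    (h : Prv Ax φ) (w : W) : Sat M w φ := by
  induction h generalizing w with
  | taut ht => exact sat_of_taut M w ht
  | ax ha => exact hax _ ha w
  | k a φ ψ =>
    simp only [sat_imp]
    exact fun hφψ hφ v hv => (sat_imp M v φ ψ).1 (hφψ v hv) (hφ v hv)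
  | mp _ _ ih₁ ih₂ => exact (sat_imp M w _ _).1 (ih₁ w) (ih₂ w)
  | nec a _ ih => exact fun v _ => ih v

variable {M}

theorem sat_of_axB (hsymm : ∀ a, Symmetric (M.R a)) {χ : Fm A} (h : AxB χ) (w : W) :
    Sat M w χ := by
  obtain ⟨a, φ, rfl⟩ := h
  exact (sat_imp M w _ _).2 fun hφ v hv => (sat_dia M v a φ).2 ⟨w, hsymm a hv, hφ⟩

theorem sat_of_axD (hser : ∀ a, Ser (M.R a)) {χ : Fm A} (h : AxD χ) (w : W) : Sat M w χ := by
  obtain ⟨a, φ, rfl⟩ := h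
  obtain ⟨v, hv⟩ := hser a w
  exact (sat_imp M w _ _).2 fun hφ => (sat_dia M w a φ).2 ⟨v, hv, hφ v hv⟩

end Soundness

section Unraveling
variable {A W : Type} {M : Kripke A W}

theorem lastEntry_eq_of_val_eq_append {s : UWorld M} {l : List (Option A × W)}
    {x : Option A × W} (h : s.val = l ++ [x]) : lastEntry s = x := by
  simp [lastEntry, h]

theorem val_eq_dropLast_append_lastEntry (s : UWorld M) : s.val = s.val.dropLast ++ [lastEntry s] :=
  (List.dropLast_append_getLast s.prop.1).symm

theorem validSeq_append_singleton (s : UWorld M) {a : A} {w' : W}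
    (h₁ : (lastEntry s).1 ≠ some a) (h₂ : M.R a (lastEntry s).2 w') :
    ValidSeq M (s.val ++ [(some a, w')]) := by
  obtain ⟨hne, ⟨w, hhead⟩, htail, hchain⟩ := s.prop
  obtain ⟨x, l, hxl⟩ := List.exists_cons_of_ne_nil hne
  refine ⟨by simp, ⟨w, by simpa [hxl] using hhead⟩, ?_, ?_⟩
  · intro y hy
    simp only [hxl, List.cons_append, List.tail_cons, List.mem_append, List.mem_singleton] at hy
    rcases hy with hy | rfl
    · exact htail y (by simpa [hxl] using hy)
    · simp
  · refine List.isChain_append.2 ⟨hchain, List.isChain_singleton _, ?_⟩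
    intro y hy z hz
    rw [List.getLast?_eq_getLast_of_ne_nil hne] at hy
    obtain rfl : y = lastEntry s := (Option.some_injective _ hy).symm
    obtain rfl : (some a, w') = z := by simpa using hz
    exact ⟨h₁, a, rfl, h₂⟩

theorem dropLast_ne_nil_of_lastEntry_ne_none (s : UWorld M) (h : (lastEntry s).1 ≠ none) :
    s.val.dropLast ≠ [] := by
  obtain ⟨hne, ⟨w, hhead⟩, -⟩ := s.prop
  intro hnil
  have hs : s.val = [lastEntry s] := by simpa [hnil] using val_eq_dropLast_append_lastEntry s
  have hlast : lastEntry s = (none, w) := by simpa [hs] using hhead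
  exact h (by rw [hlast])

theorem validSeq_dropLast (s : UWorld M) (hne : s.val.dropLast ≠ []) :
    ValidSeq M s.val.dropLast := by
  obtain ⟨-, ⟨w, hhead⟩, htail, hchain⟩ := s.prop
  obtain ⟨x, y, l, hxyl⟩ : ∃ x y l, s.val = x :: y :: l := by
    match hs : s.val, hne with
    | x :: y :: l, _ => exact ⟨x, y, l, rfl⟩
  rw [hxyl] at hhead htail hchain ⊢
  refine ⟨by simp, ⟨w, by simpa using hhead⟩, fun z hz => htail z ?_, ?_⟩
  · simp only [List.dropLast_cons_cons, List.tail_cons] at hz ⊢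
    exact (List.dropLast_sublist _).subset hz
  · exact hchain.prefix (List.dropLast_prefix _)

theorem step_lastEntry_of_val_eq_dropLast {s t : UWorld M} (h : t.val = s.val.dropLast) :
    Step M (lastEntry t) (lastEntry s) := by
  have hchain : List.IsChain (Step M) (t.val ++ [lastEntry s]) := by
    rw [h, ← val_eq_dropLast_append_lastEntry]; exact s.prop.2.2.2
  exact (List.isChain_append.1 hchain).2.2 _
    (List.getLast?_eq_getLast_of_ne_nil t.prop.1) _ rfl

variable (M) in
def symUnraveling : Kripke A (UWorld M) where
  R a s t := ((lastEntry s).1 = some a ∧ t.val = s.val.dropLast) ∨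
    ((lastEntry s).1 ≠ some a ∧ ∃ w', M.R a (lastEntry s).2 w' ∧ t.val = s.val ++ [(some a, w')])
  V n s := M.V n (lastEntry s).2

theorem isAAUnraveling_symUnraveling : IsAAUnraveling M (symUnraveling M) := by
  refine ⟨fun b s hs t => ⟨?_, fun h => Or.inr ⟨hs, h⟩⟩, fun _ _ => Iff.rfl⟩
  rintro (⟨h, -⟩ | ⟨-, h⟩)
  exacts [absurd h hs, h]

theorem symUnraveling_R_iff_of_lastEntry {a : A} {s : UWorld M} (h : (lastEntry s).1 = some a)
    (t : UWorld M) : (symUnraveling M).R a s t ↔ t.val = s.val.dropLast :=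
  ⟨fun ht => ht.elim And.right fun ht => absurd h ht.1, fun ht => Or.inl ⟨h, ht⟩⟩

theorem symmetric_symUnraveling (a : A) : Symmetric ((symUnraveling M).R a) := by
  rintro s t (⟨hs, ht⟩ | ⟨hs, w', hR, ht⟩)
  · obtain ⟨hne, b, hb, hR⟩ := step_lastEntry_of_val_eq_dropLast ht
    rw [hs] at hne hb
    obtain rfl := Option.some_injective _ hb.symm
    refine Or.inr ⟨hne, _, hR, ?_⟩
    rw [ht, ← hs]
    exact val_eq_dropLast_append_lastEntry s
  · have ht' : lastEntry t = (some a, w') := lastEntry_eq_of_val_eq_append ht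
    exact Or.inl ⟨by rw [ht'], by rw [ht, List.dropLast_concat]⟩

theorem ser_symUnraveling (hser : ∀ a, Ser (M.R a)) (a : A) : Ser ((symUnraveling M).R a) := by
  intro s
  by_cases h : (lastEntry s).1 = some a
  · have hne := dropLast_ne_nil_of_lastEntry_ne_none s (by simp [h])
    exact ⟨⟨_, validSeq_dropLast s hne⟩, Or.inl ⟨h, rfl⟩⟩
  · obtain ⟨w', hw'⟩ := hser a (lastEntry s).2
    exact ⟨⟨_, validSeq_append_singleton s h hw'⟩, Or.inr ⟨h, w', hw', rfl⟩⟩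

variable (M) in
def UWorld.root (w : W) : UWorld M :=
  ⟨[(none, w)], by simp, ⟨w, rfl⟩, by simp, List.isChain_singleton _⟩

end Unraveling

section Invariance
variable {A W₁ W₂ : Type} {M : Kripke A W₁} {N : Kripke A W₂} {f : Option A → W₁ → W₂ → Prop}

theorem LMinus.sat_iff_of_isAAFamily (hf : IsAAFamily M N f) {a : A} {φ : Fm A}
    (hφ : LMinus a φ) {o : Option A} (ho : o = none ∨ o = some a) {u : W₁} {v : W₂}
    (huv : f o u v) : Sat M u φ ↔ Sat N v φ := by
  induction hφ generalizing o u v with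
  | atom a n => exact (hf o u v huv).1 n
  | @box a x ψ hxa _ ih =>
    have hox : o ≠ some x := by rcases ho with rfl | rfl <;> simp [hxa.symm]
    obtain ⟨forth, back⟩ := (hf o u v huv).2 x hox
    constructor
    · intro h v' hv'
      obtain ⟨u', hu', hf'⟩ := back v' hv'
      exact (ih (Or.inr rfl) hf').1 (h u' hu')
    · intro h u' hu'
      obtain ⟨v', hv', hf'⟩ := forth u' hu'
      exact (ih (Or.inr rfl) hf').2 (h v' hv')
  | neg _ ih => exact not_congr (ih ho huv)
  | and _ _ ih₁ ih₂ => exact and_congr (ih₁ ho huv) (ih₂ ho huv)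

theorem LAlt.sat_iff_of_isAAFamily (hf : IsAAFamily M N f) {φ : Fm A} (hφ : LAlt φ)
    {u : W₁} {v : W₂} (huv : f none u v) : Sat M u φ ↔ Sat N v φ := by
  induction hφ with
  | atom n => exact (hf none u v huv).1 n
  | chi a hφ => exact hφ.sat_iff_of_isAAFamily hf (Or.inl rfl) huv
  | neg _ ih => exact not_congr ih
  | and _ _ ih₁ ih₂ => exact and_congr ih₁ ih₂

theorem IsAAUnraveling.isAAFamily_PFam {N : Kripke A (UWorld M)} (hN : IsAAUnraveling M N) :
    IsAAFamily M N (PFam M) := by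
  rintro o u s hs
  obtain rfl : o = (lastEntry s).1 := by rw [hs]
  obtain rfl : u = (lastEntry s).2 := by rw [hs]
  refine ⟨fun n => (hN.2 n s).symm, fun b hb => ⟨fun u' hu' => ?_, fun t ht => ?_⟩⟩
  · refine ⟨⟨_, validSeq_append_singleton s hb hu'⟩, (hN.1 b s hb _).2 ⟨u', hu', rfl⟩, ?_⟩
    exact lastEntry_eq_of_val_eq_append rfl
  · obtain ⟨u', hu', ht'⟩ := (hN.1 b s hb t).1 ht
    exact ⟨u', hu', lastEntry_eq_of_val_eq_append ht'⟩

theorem LAlt.sat_iff_sat_root {N : Kripke A (UWorld M)} (hN : IsAAUnraveling M N) {φ : Fm A}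
    (hφ : LAlt φ) (w : W₁) : Sat M w φ ↔ Sat N (UWorld.root M w) φ :=
  hφ.sat_iff_of_isAAFamily hN.isAAFamily_PFam rfl

end Invariance

theorem LAlt.prv_of_valid_symUnraveling_canonicalModel {A : Type} {Ax Ax' : Fm A → Prop}
    (hax : ∀ χ, Ax' χ → ∀ s, Sat (symUnraveling (canonicalModel Ax)) s χ) {φ : Fm A}
    (hφ : LAlt φ) (h : Prv Ax' φ) : Prv Ax φ := by
  by_contra hn
  obtain ⟨Γ, hΓ⟩ := exists_not_sat_canonicalModel hn
  exact hΓ ((hφ.sat_iff_sat_root isAAUnraveling_symUnraveling Γ).2 (h.sound _ hax _))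

theorem stmt4_general {A : Type} :
    (∀ (φ : Fm A), LAlt φ →
      (∃ (W : Type) (M : Kripke A W) (w : W), Sat M w φ) →
      ∃ (W' : Type) (M' : Kripke A W') (w' : W'),
        (∀ a : A, Symmetric (M'.R a)) ∧ Sat M' w' φ) ∧
    (∀ (W : Type) (M : Kripke A W), ∃ N : Kripke A (UWorld M),
      IsAAUnraveling M N ∧
      (∀ (a : A) (s t : UWorld M), (lastEntry s).1 = some a →
        (N.R a s t ↔ t.val = s.val.dropLast)) ∧
      (∀ a : A, Symmetric (N.R a))) ∧
    (∀ φ : Fm A, LAlt φ → (Prv AxNone φ ↔ Prv AxB φ)) ∧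
    (∀ φ : Fm A, LAlt φ → (Prv AxD φ ↔ Prv (fun χ => AxD χ ∨ AxB χ) φ)) := by
  refine ⟨?_, fun W M => ?_, fun φ hφ => ⟨?_, ?_⟩, fun φ hφ => ⟨?_, ?_⟩⟩
  · rintro φ hφ ⟨W, M, w, hw⟩
    exact ⟨_, symUnraveling M, UWorld.root M w, symmetric_symUnraveling,
      (hφ.sat_iff_sat_root isAAUnraveling_symUnraveling w).1 hw⟩
  · exact ⟨symUnraveling M, isAAUnraveling_symUnraveling,
      fun _ _ t h => symUnraveling_R_iff_of_lastEntry h t, symmetric_symUnraveling⟩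
  · exact Prv.mono fun _ => False.elim
  · exact hφ.prv_of_valid_symUnraveling_canonicalModel fun _ => sat_of_axB symmetric_symUnraveling
  · exact Prv.mono fun _ => Or.inl
  · refine hφ.prv_of_valid_symUnraveling_canonicalModel fun χ => ?_
    rintro (hχ | hχ)
    · exact sat_of_axD (ser_symUnraveling (ser_canonicalModel fun _ => id)) hχ
    · exact sat_of_axB symmetric_symUnraveling hχ

/-- satisfiable agent-alternating formulas are satisfiable on symmetric models;
in particular via the unraveling with R_a(s) = {s minus its last element}; hence K = KB and
KD = KDB on agent-alternating formulas. -/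
theorem stmt4 {A : Type} (hA : ∃ a b : A, a ≠ b) :
    (∀ (φ : Fm A), LAlt φ →
      (∃ (W : Type) (M : Kripke A W) (w : W), Sat M w φ) →
      ∃ (W' : Type) (M' : Kripke A W') (w' : W'),
        (∀ a : A, Symmetric (M'.R a)) ∧ Sat M' w' φ) ∧
    (∀ (W : Type) (M : Kripke A W), ∃ N : Kripke A (UWorld M),
      IsAAUnraveling M N ∧
      (∀ (a : A) (s t : UWorld M), (lastEntry s).1 = some a →
        (N.R a s t ↔ t.val = s.val.dropLast)) ∧
      (∀ a : A, Symmetric (N.R a))) ∧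
    (∀ φ : Fm A, LAlt φ → (Prv AxNone φ ↔ Prv AxB φ)) ∧
    (∀ φ : Fm A, LAlt φ → (Prv AxD φ ↔ Prv (fun χ => AxD χ ∨ AxB χ) φ)) :=
  stmt4_general
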